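/- Let V ∈ span(e₁, …, e_{2n}) be a unit vector of the oscillator algebra 𝔤ₙ(λ). Then the operator A_Vᵀ A_V acts as follows: A_Vᵀ A_V W = (1/4) g(W, φV) φV for W ∈ span(e₁, …, e_{2n}); A_Vᵀ A_V ξ = (1/4) ξ − (1/2) g(V, E_λ V) ζ; A_Vᵀ A_V ζ = −(1/2) g(V, E_λ V) ξ + g(V, E_λ² V) ζ. In particular φV is an eigenvector with eigenvalue 1/4, and 0 is an eigenvalue of multiplicity at least 2n − 1. -/

import Mathlib

open scoped RealInnerProductSpace
open Finset

noncomputable section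

/-- The underlying inner product space of the oscillator algebra `𝔤ₙ(λ)`:
a `(2n+2)`-dimensional real inner product space. -/
abbrev Osc (n : ℕ) := EuclideanSpace ℝ (Fin (2*n+2))

/-- The basis vectors `e₁, …, eₙ`. -/
def oe (n : ℕ) (i : Fin n) : Osc n :=
  EuclideanSpace.single ⟨i.1, by have := i.2; omega⟩ 1

/-- The basis vectors `e_{n+1}, …, e_{2n}`. -/
def oE (n : ℕ) (i : Fin n) : Osc n :=
  EuclideanSpace.single ⟨n + i.1, by have := i.2; omega⟩ 1

/-- The basis vector `ξ`. -/
def oXi (n : ℕ) : Osc n := EuclideanSpace.single ⟨2*n, by omega⟩ 1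

/-- The basis vector `ζ`. -/
def oZeta (n : ℕ) : Osc n := EuclideanSpace.single ⟨2*n+1, by omega⟩ 1

/-- `br` is the Lie bracket of the oscillator algebra `𝔤ₙ(λ)`: the bilinear map
determined by `[eᵢ, e_{n+j}] = δᵢⱼ ξ`, `[ζ, eⱼ] = λⱼ e_{n+j}`, `[ζ, e_{n+j}] = −λⱼ eⱼ`,
all other brackets of basis vectors being zero. -/
structure IsOscBracket (n : ℕ) (lam : Fin n → ℝ)
    (br : Osc n →ₗ[ℝ] Osc n →ₗ[ℝ] Osc n) : Prop where
  anti : ∀ X Y : Osc n, br X Y = - br Y X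
  ee : ∀ i j : Fin n, br (oe n i) (oe n j) = 0
  eE : ∀ i j : Fin n, br (oe n i) (oE n j) = if i = j then oXi n else 0
  EE : ∀ i j : Fin n, br (oE n i) (oE n j) = 0
  exi : ∀ i : Fin n, br (oe n i) (oXi n) = 0
  Exi : ∀ i : Fin n, br (oE n i) (oXi n) = 0
  zee : ∀ j : Fin n, br (oZeta n) (oe n j) = lam j • oE n j
  zeE : ∀ j : Fin n, br (oZeta n) (oE n j) = - (lam j • oe n j)
  xize : br (oXi n) (oZeta n) = 0

/-- `nab` is the Levi-Civita connection of the left-invariant metric (evaluated on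
left-invariant fields): the bilinear map determined by the Koszul formula
`2 g(∇_X Y, Z) = g([X,Y], Z) − g([Y,Z], X) + g([Z,X], Y)`. -/
def IsLeviCivita (n : ℕ) (br nab : Osc n →ₗ[ℝ] Osc n →ₗ[ℝ] Osc n) : Prop :=
  ∀ X Y Z : Osc n,
    2 * ⟪nab X Y, Z⟫ = ⟪br X Y, Z⟫ - ⟪br Y Z, X⟫ + ⟪br Z X, Y⟫

/-- The Nomizu operator `A_V X = −∇_X V`. -/
def nomizu {n : ℕ} (nab : Osc n →ₗ[ℝ] Osc n →ₗ[ℝ] Osc n) (V X : Osc n) : Osc n :=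
  -(nab X V)

/-- The covariant derivative of the Nomizu operator:
`(∇_X A_V) Y = ∇_X (A_V Y) − A_V (∇_X Y)`. -/
def covNomizu {n : ℕ} (nab : Osc n →ₗ[ℝ] Osc n →ₗ[ℝ] Osc n) (V X Y : Osc n) : Osc n :=
  nab X (nomizu nab V Y) - nomizu nab V (nab X Y)

/-- The curvature tensor `R(X,Y)Z = ∇_X ∇_Y Z − ∇_Y ∇_X Z − ∇_{[X,Y]} Z`. -/
def curvR {n : ℕ} (br nab : Osc n →ₗ[ℝ] Osc n →ₗ[ℝ] Osc n) (X Y Z : Osc n) : Osc n :=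
  nab X (nab Y Z) - nab Y (nab X Z) - nab (br X Y) Z

/-- A unit vector `V ∈ 𝔤ₙ(λ)` is a *minimal* unit vector field if there is an orthonormal
basis `u₁, …, u_{2n+2}` of eigenvectors of `A_Vᵀ A_V` (the eigenvector condition being
expressed as `g(A_V W, A_V uᵢ) = σᵢ² g(W, uᵢ)` for all `W`) with eigenvalues `σᵢ²` such that
`Σᵢ ((∇_{uᵢ} A_V)uᵢ + A_V R(V, A_V uᵢ)uᵢ)/(1 + σᵢ²) = (Σᵢ σᵢ²/(1 + σᵢ²)) V`. -/
def IsMinimal {n : ℕ} (br nab : Osc n →ₗ[ℝ] Osc n →ₗ[ℝ] Osc n) (V : Osc n) : Prop :=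
  ∃ (u : Fin (2*n+2) → Osc n) (σ : Fin (2*n+2) → ℝ),
    (∀ i j, ⟪u i, u j⟫ = if i = j then 1 else 0) ∧
    (∀ i, ∀ W : Osc n,
      ⟪nomizu nab V W, nomizu nab V (u i)⟫ = (σ i)^2 * ⟪W, u i⟫) ∧
    (∑ i, (1 + (σ i)^2)⁻¹ •
        (covNomizu nab V (u i) (u i) +
          nomizu nab V (curvR br nab V (nomizu nab V (u i)) (u i))))
      = (∑ i, (σ i)^2 / (1 + (σ i)^2)) • V

/-- The operator `φ` with `φ eᵢ = e_{n+i}`, `φ e_{n+i} = −eᵢ`, `φ ξ = φ ζ = 0`. -/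
structure IsPhi (n : ℕ) (phi : Osc n →ₗ[ℝ] Osc n) : Prop where
  he : ∀ i : Fin n, phi (oe n i) = oE n i
  hE : ∀ i : Fin n, phi (oE n i) = - oe n i
  hxi : phi (oXi n) = 0
  hzeta : phi (oZeta n) = 0

/-- The operator `E_λ` with `E_λ eᵢ = λᵢ eᵢ`, `E_λ e_{n+i} = λᵢ e_{n+i}`, `E_λ ξ = E_λ ζ = 0`. -/
structure IsElam (n : ℕ) (lam : Fin n → ℝ) (El : Osc n →ₗ[ℝ] Osc n) : Prop where
  he : ∀ i : Fin n, El (oe n i) = lam i • oe n i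
  hE : ∀ i : Fin n, El (oE n i) = lam i • oE n i
  hxi : El (oXi n) = 0
  hzeta : El (oZeta n) = 0

/-!
On left-invariant fields the bracket has the closed form
`[X, Y] = g(φX, Y) ξ + g(X, ζ) φE_λY − g(Y, ζ) φE_λX`. As `φ` and `φE_λ` are skew-adjoint, the
Koszul formula turns this into
`∇_X Y = ½ g(φX, Y) ξ − ½ g(X, ξ) φY − ½ g(Y, ξ) φX + g(X, ζ) φE_λY`.
For `V ⊥ ξ, ζ` the Nomizu operator is then a sum of three rank-one maps,
`A_V X = ½ g(X, φV) ξ + ½ g(X, ξ) φV − g(X, ζ) φE_λV`, whose adjoint can be read off. Since `φ`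
is an isometry on `{ξ, ζ}ᗮ`, composing the two gives `A_Vᵀ A_V` on the whole algebra.
-/

namespace Osc

variable {n : ℕ}

@[simp] lemma inner_oe_oe (i j : Fin n) : ⟪oe n i, oe n j⟫ = if i = j then 1 else 0 := by
  simp [oe, EuclideanSpace.inner_single_left, Fin.ext_iff]
@[simp] lemma inner_oE_oE (i j : Fin n) : ⟪oE n i, oE n j⟫ = if i = j then 1 else 0 := by
  simp [oE, EuclideanSpace.inner_single_left, Fin.ext_iff]
@[simp] lemma inner_oe_oE (i j : Fin n) : ⟪oe n i, oE n j⟫ = 0 := by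
  simp [oe, oE, EuclideanSpace.inner_single_left, Fin.ext_iff]; omega
@[simp] lemma inner_oE_oe (i j : Fin n) : ⟪oE n i, oe n j⟫ = 0 := by
  rw [real_inner_comm, inner_oe_oE]
@[simp] lemma inner_oe_xi (i : Fin n) : ⟪oe n i, oXi n⟫ = 0 := by
  simp [oe, oXi, EuclideanSpace.inner_single_left, Fin.ext_iff]; omega
@[simp] lemma inner_oE_xi (i : Fin n) : ⟪oE n i, oXi n⟫ = 0 := by
  simp [oE, oXi, EuclideanSpace.inner_single_left, Fin.ext_iff]; omega
@[simp] lemma inner_oe_zeta (i : Fin n) : ⟪oe n i, oZeta n⟫ = 0 := by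
  simp [oe, oZeta, EuclideanSpace.inner_single_left, Fin.ext_iff]; omega
@[simp] lemma inner_oE_zeta (i : Fin n) : ⟪oE n i, oZeta n⟫ = 0 := by
  simp [oE, oZeta, EuclideanSpace.inner_single_left, Fin.ext_iff]; omega
@[simp] lemma inner_xi_oe (i : Fin n) : ⟪oXi n, oe n i⟫ = 0 := by
  rw [real_inner_comm, inner_oe_xi]
@[simp] lemma inner_xi_oE (i : Fin n) : ⟪oXi n, oE n i⟫ = 0 := by
  rw [real_inner_comm, inner_oE_xi]
@[simp] lemma inner_zeta_oe (i : Fin n) : ⟪oZeta n, oe n i⟫ = 0 := by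
  rw [real_inner_comm, inner_oe_zeta]
@[simp] lemma inner_zeta_oE (i : Fin n) : ⟪oZeta n, oE n i⟫ = 0 := by
  rw [real_inner_comm, inner_oE_zeta]
@[simp] lemma inner_xi_xi : ⟪oXi n, oXi n⟫ = 1 := by
  simp [oXi]
@[simp] lemma inner_zeta_zeta : ⟪oZeta n, oZeta n⟫ = 1 := by
  simp [oZeta]
@[simp] lemma norm_xi : ‖oXi n‖ = 1 := by
  simp [oXi]
@[simp] lemma norm_zeta : ‖oZeta n‖ = 1 := by
  simp [oZeta]
@[simp] lemma inner_xi_zeta : ⟪oXi n, oZeta n⟫ = 0 := by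
  simp [oXi, oZeta, EuclideanSpace.inner_single_left]
@[simp] lemma inner_zeta_xi : ⟪oZeta n, oXi n⟫ = 0 := by
  rw [real_inner_comm, inner_xi_zeta]

lemma span_basis_eq_top :
    Submodule.span ℝ (Set.range (oe n) ∪ Set.range (oE n) ∪ {oXi n, oZeta n}) = ⊤ := by
  refine eq_top_iff.2 ((EuclideanSpace.basisFun (Fin (2*n+2)) ℝ).toBasis.span_eq.ge.trans
    (Submodule.span_mono ?_))
  rintro _ ⟨⟨k, hk⟩, rfl⟩
  simp only [OrthonormalBasis.coe_toBasis, EuclideanSpace.basisFun_apply]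
  by_cases h₁ : k < n
  · exact Or.inl (Or.inl ⟨⟨k, h₁⟩, rfl⟩)
  by_cases h₂ : k < 2 * n
  · exact Or.inl (Or.inr ⟨⟨k - n, by omega⟩, by simp only [oE]; congr; omega⟩)
  obtain rfl | rfl : k = 2 * n ∨ k = 2 * n + 1 := by omega
  · exact Or.inr (Or.inl rfl)
  · exact Or.inr (Or.inr rfl)

theorem linearMap_ext {M : Type*} [AddCommGroup M] [Module ℝ M] {f g : Osc n →ₗ[ℝ] M}
    (he : ∀ i, f (oe n i) = g (oe n i)) (hE : ∀ i, f (oE n i) = g (oE n i))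
    (hxi : f (oXi n) = g (oXi n)) (hzeta : f (oZeta n) = g (oZeta n)) : f = g := by
  refine LinearMap.ext_on span_basis_eq_top ?_
  rintro _ ((⟨i, rfl⟩ | ⟨i, rfl⟩) | rfl | rfl)
  exacts [he i, hE i, hxi, hzeta]

lemma inner_xi_eq_zero_of_mem_span {X : Osc n}
    (hX : X ∈ Submodule.span ℝ (Set.range (oe n) ∪ Set.range (oE n))) : ⟪X, oXi n⟫ = 0 := by
  refine (Submodule.span_le (p := LinearMap.ker ((innerₗ (Osc n)).flip (oXi n)))).2 ?_ hX
  rintro _ (⟨i, rfl⟩ | ⟨i, rfl⟩) <;> simp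

lemma inner_zeta_eq_zero_of_mem_span {X : Osc n}
    (hX : X ∈ Submodule.span ℝ (Set.range (oe n) ∪ Set.range (oE n))) : ⟪X, oZeta n⟫ = 0 := by
  refine (Submodule.span_le (p := LinearMap.ker ((innerₗ (Osc n)).flip (oZeta n)))).2 ?_ hX
  rintro _ (⟨i, rfl⟩ | ⟨i, rfl⟩) <;> simp

end Osc

section

variable {n : ℕ} {lam : Fin n → ℝ} {phi El : Osc n →ₗ[ℝ] Osc n}
  {br nab : Osc n →ₗ[ℝ] Osc n →ₗ[ℝ] Osc n}

namespace IsPhi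

lemma inner_map_left (hphi : IsPhi n phi) (X Y : Osc n) : ⟪phi X, Y⟫ = -⟪X, phi Y⟫ := by
  have key : (innerₗ (Osc n)).compl₁₂ phi LinearMap.id = -(innerₗ (Osc n)).compl₂ phi := by
    refine Osc.linearMap_ext ?_ ?_ ?_ ?_ <;> intros <;> refine Osc.linearMap_ext ?_ ?_ ?_ ?_ <;>
      intros <;> simp [hphi.he, hphi.hE, hphi.hxi, hphi.hzeta]
  exact LinearMap.congr_fun₂ key X Y

lemma map_map (hphi : IsPhi n phi) (X : Osc n) :
    phi (phi X) = -X + ⟪X, oXi n⟫ • oXi n + ⟪X, oZeta n⟫ • oZeta n := by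
  have key : phi ∘ₗ phi = -LinearMap.id + ((innerₗ (Osc n)).flip (oXi n)).smulRight (oXi n)
      + ((innerₗ (Osc n)).flip (oZeta n)).smulRight (oZeta n) := by
    refine Osc.linearMap_ext ?_ ?_ ?_ ?_ <;> intros <;>
      simp [hphi.he, hphi.hE, hphi.hxi, hphi.hzeta]
  exact LinearMap.congr_fun key X

lemma inner_map_map (hphi : IsPhi n phi) (X Y : Osc n) :
    ⟪phi X, phi Y⟫ = ⟪X, Y⟫ - ⟪X, oXi n⟫ * ⟪Y, oXi n⟫ - ⟪X, oZeta n⟫ * ⟪Y, oZeta n⟫ := by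
  rw [hphi.inner_map_left, hphi.map_map]
  simp only [inner_add_right, inner_neg_right, real_inner_smul_right]
  ring

lemma inner_map_self_eq_one (hphi : IsPhi n phi) {X : Osc n} (hXxi : ⟪X, oXi n⟫ = 0)
    (hXzeta : ⟪X, oZeta n⟫ = 0) (hX : ‖X‖ = 1) : ⟪phi X, phi X⟫ = 1 := by
  rw [hphi.inner_map_map, hXxi, hXzeta, real_inner_self_eq_norm_sq, hX]
  ring

lemma inner_xi_map (hphi : IsPhi n phi) (X : Osc n) : ⟪oXi n, phi X⟫ = 0 := by
  rw [← neg_eq_zero, ← hphi.inner_map_left, hphi.hxi, inner_zero_left]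

lemma inner_map_xi (hphi : IsPhi n phi) (X : Osc n) : ⟪phi X, oXi n⟫ = 0 := by
  rw [real_inner_comm, hphi.inner_xi_map]

lemma inner_zeta_map (hphi : IsPhi n phi) (X : Osc n) : ⟪oZeta n, phi X⟫ = 0 := by
  rw [← neg_eq_zero, ← hphi.inner_map_left, hphi.hzeta, inner_zero_left]

lemma inner_map_zeta (hphi : IsPhi n phi) (X : Osc n) : ⟪phi X, oZeta n⟫ = 0 := by
  rw [real_inner_comm, hphi.inner_zeta_map]

end IsPhi

namespace IsElam

lemma isSymmetric (hEl : IsElam n lam El) : El.IsSymmetric := by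
  have key : (innerₗ (Osc n)).compl₁₂ El LinearMap.id = (innerₗ (Osc n)).compl₂ El := by
    refine Osc.linearMap_ext ?_ ?_ ?_ ?_ <;> intros <;> refine Osc.linearMap_ext ?_ ?_ ?_ ?_ <;>
      intros <;> simp [hEl.he, hEl.hE, hEl.hxi, hEl.hzeta] <;> split_ifs with h <;> simp [h]
  exact LinearMap.congr_fun₂ key

lemma inner_map_xi (hEl : IsElam n lam El) (X : Osc n) : ⟪El X, oXi n⟫ = 0 := by
  rw [hEl.isSymmetric, hEl.hxi, inner_zero_right]

lemma inner_map_zeta (hEl : IsElam n lam El) (X : Osc n) : ⟪El X, oZeta n⟫ = 0 := by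
  rw [hEl.isSymmetric, hEl.hzeta, inner_zero_right]

lemma map_comm_phi (hEl : IsElam n lam El) (hphi : IsPhi n phi) (X : Osc n) :
    phi (El X) = El (phi X) := by
  have key : phi ∘ₗ El = El ∘ₗ phi := by
    refine Osc.linearMap_ext ?_ ?_ ?_ ?_ <;> intros <;>
      simp [hEl.he, hEl.hE, hEl.hxi, hEl.hzeta, hphi.he, hphi.hE, hphi.hxi, hphi.hzeta]
  exact LinearMap.congr_fun key X

lemma inner_phi_map_left (hEl : IsElam n lam El) (hphi : IsPhi n phi) (X Y : Osc n) :
    ⟪phi (El X), Y⟫ = -⟪phi (El Y), X⟫ := by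
  rw [hphi.inner_map_left, hEl.isSymmetric, ← hEl.map_comm_phi hphi, real_inner_comm]

end IsElam

namespace IsOscBracket

lemma apply_self (hbr : IsOscBracket n lam br) (X : Osc n) : br X X = 0 := by
  have h := hbr.anti X X
  rwa [eq_neg_iff_add_eq_zero, ← two_smul ℝ, smul_eq_zero, or_iff_right two_ne_zero] at h

lemma apply_eq (hbr : IsOscBracket n lam br) (hphi : IsPhi n phi) (hEl : IsElam n lam El)
    (X Y : Osc n) :
    br X Y = ⟪phi X, Y⟫ • oXi n + ⟪X, oZeta n⟫ • phi (El Y) - ⟪Y, oZeta n⟫ • phi (El X) := by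
  let model : Osc n →ₗ[ℝ] Osc n →ₗ[ℝ] Osc n := LinearMap.mk₂ ℝ
    (fun X Y => ⟪phi X, Y⟫ • oXi n + ⟪X, oZeta n⟫ • phi (El Y) - ⟪Y, oZeta n⟫ • phi (El X))
    (fun _ _ _ => by simp only [map_add, inner_add_left]; module)
    (fun _ _ _ => by simp only [map_smul, real_inner_smul_left]; module)
    (fun _ _ _ => by simp only [map_add, inner_add_left, inner_add_right]; module)
    (fun _ _ _ => by simp only [map_smul, real_inner_smul_left, real_inner_smul_right]; module)
  have key : br = model := by
    refine Osc.linearMap_ext ?_ ?_ ?_ ?_ <;> intros <;> refine Osc.linearMap_ext ?_ ?_ ?_ ?_ <;>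
      intros <;>
      first
      | simp [model, hbr.ee, hbr.eE, hbr.EE, hbr.exi, hbr.Exi, hbr.zee, hbr.zeE, hbr.xize,
          hbr.apply_self, hphi.he, hphi.hE, hphi.hxi, hphi.hzeta, hEl.he, hEl.hE, hEl.hxi,
          hEl.hzeta]; done
      | rw [hbr.anti]
        simp [model, hbr.eE, hbr.exi, hbr.Exi, hbr.zee, hbr.zeE, hbr.xize, hphi.he, hphi.hE,
          hphi.hxi, hphi.hzeta, hEl.he, hEl.hE, hEl.hxi, hEl.hzeta, eq_comm]
  exact LinearMap.congr_fun₂ key X Y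

end IsOscBracket

lemma IsLeviCivita.apply_eq (hlc : IsLeviCivita n br nab) (hbr : IsOscBracket n lam br)
    (hphi : IsPhi n phi) (hEl : IsElam n lam El) (X Y : Osc n) :
    nab X Y = (1/2 * ⟪phi X, Y⟫) • oXi n - (1/2 * ⟪X, oXi n⟫) • phi Y
      - (1/2 * ⟪Y, oXi n⟫) • phi X + ⟪X, oZeta n⟫ • phi (El Y) := by
  refine ext_inner_right ℝ fun Z => ?_
  have koszul := hlc X Y Z
  simp only [hbr.apply_eq hphi hEl, inner_add_left, inner_sub_left, real_inner_smul_left]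
    at koszul ⊢
  rw [hEl.inner_phi_map_left hphi Z X, hEl.inner_phi_map_left hphi Y X,
    hEl.inner_phi_map_left hphi Z Y, hphi.inner_map_left Z X, real_inner_comm (phi X) Z]
    at koszul
  rw [real_inner_comm (oXi n) X, real_inner_comm (oXi n) Y]
  linarith

lemma nomizu_eq {V : Osc n} (hlc : IsLeviCivita n br nab) (hbr : IsOscBracket n lam br)
    (hphi : IsPhi n phi) (hEl : IsElam n lam El) (hVxi : ⟪V, oXi n⟫ = 0) (X : Osc n) :
    nomizu nab V X = (1/2 * ⟪X, phi V⟫) • oXi n + (1/2 * ⟪X, oXi n⟫) • phi V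
      - ⟪X, oZeta n⟫ • phi (El V) := by
  rw [nomizu, hlc.apply_eq hbr hphi hEl, hVxi, hphi.inner_map_left]
  module

lemma adjoint_nomizu_eq {V : Osc n} (hlc : IsLeviCivita n br nab) (hbr : IsOscBracket n lam br)
    (hphi : IsPhi n phi) (hEl : IsElam n lam El) (hVxi : ⟪V, oXi n⟫ = 0)
    {AT : Osc n →ₗ[ℝ] Osc n} (hAT : ∀ X Y : Osc n, ⟪nomizu nab V X, Y⟫ = ⟪X, AT Y⟫)
    (Y : Osc n) :
    AT Y = (1/2 * ⟪Y, oXi n⟫) • phi V + (1/2 * ⟪Y, phi V⟫) • oXi n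
      - ⟪Y, phi (El V)⟫ • oZeta n := by
  refine ext_inner_left ℝ fun X => ?_
  rw [← hAT, nomizu_eq hlc hbr hphi hEl hVxi]
  simp only [inner_add_right, inner_sub_right, real_inner_smul_right, real_inner_comm Y]
  ring

lemma adjoint_nomizu_nomizu_eq {V : Osc n} (hlc : IsLeviCivita n br nab)
    (hbr : IsOscBracket n lam br) (hphi : IsPhi n phi) (hEl : IsElam n lam El)
    (hVxi : ⟪V, oXi n⟫ = 0) (hVzeta : ⟪V, oZeta n⟫ = 0) (hVunit : ‖V‖ = 1)
    {AT : Osc n →ₗ[ℝ] Osc n} (hAT : ∀ X Y : Osc n, ⟪nomizu nab V X, Y⟫ = ⟪X, AT Y⟫)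
    (X : Osc n) :
    AT (nomizu nab V X) = (1/4 * ⟪X, phi V⟫) • phi V
      + ⟪X, oXi n⟫ • ((1/4 : ℝ) • oXi n - (1/2 * ⟪V, El V⟫) • oZeta n)
      + ⟪X, oZeta n⟫ • (-((1/2 * ⟪V, El V⟫) • oXi n) + ⟪V, El (El V)⟫ • oZeta n) := by
  have hphiElV_phiV : ⟪phi (El V), phi V⟫ = ⟪V, El V⟫ := by
    rw [hphi.inner_map_map, hVxi, hVzeta, hEl.isSymmetric]; ring
  have hphiElV : ⟪phi (El V), phi (El V)⟫ = ⟪V, El (El V)⟫ := by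
    rw [hphi.inner_map_map, hEl.inner_map_xi, hEl.inner_map_zeta, hEl.isSymmetric]; ring
  rw [adjoint_nomizu_eq hlc hbr hphi hEl hVxi hAT, nomizu_eq hlc hbr hphi hEl hVxi]
  simp only [inner_add_left, inner_sub_left, real_inner_smul_left, hphi.inner_xi_map,
    hphi.inner_map_xi, Osc.inner_xi_xi, hphi.inner_map_self_eq_one hVxi hVzeta hVunit,
    real_inner_comm (phi (El V)) (phi V), hphiElV_phiV, hphiElV]
  module

end

theorem ata_action_general (n : ℕ) (lam : Fin n → ℝ)
    (br nab : Osc n →ₗ[ℝ] Osc n →ₗ[ℝ] Osc n)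
    (hbr : IsOscBracket n lam br) (hlc : IsLeviCivita n br nab)
    (phi El : Osc n →ₗ[ℝ] Osc n) (hphi : IsPhi n phi) (hEl : IsElam n lam El)
    (V : Osc n)
    (hV : V ∈ Submodule.span ℝ (Set.range (oe n) ∪ Set.range (oE n)))
    (hVunit : ‖V‖ = 1)
    (AT : Osc n →ₗ[ℝ] Osc n)
    (hAT : ∀ X Y : Osc n, ⟪nomizu nab V X, Y⟫ = ⟪X, AT Y⟫) :
    (∀ W ∈ Submodule.span ℝ (Set.range (oe n) ∪ Set.range (oE n)),
      AT (nomizu nab V W) = ((1/4) * ⟪W, phi V⟫) • phi V) ∧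
    AT (nomizu nab V (oXi n)) =
      ((1/4) : ℝ) • oXi n - ((1/2) * ⟪V, El V⟫) • oZeta n ∧
    AT (nomizu nab V (oZeta n)) =
      -(((1/2) * ⟪V, El V⟫) • oXi n) + ⟪V, El (El V)⟫ • oZeta n ∧
    AT (nomizu nab V (phi V)) = ((1/4) : ℝ) • phi V := by
  have hVxi := Osc.inner_xi_eq_zero_of_mem_span hV
  have hVzeta := Osc.inner_zeta_eq_zero_of_mem_span hV
  have hATA := adjoint_nomizu_nomizu_eq hlc hbr hphi hEl hVxi hVzeta hVunit hAT
  refine ⟨fun W hW => ?_, ?_, ?_, ?_⟩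
  · rw [hATA, Osc.inner_xi_eq_zero_of_mem_span hW, Osc.inner_zeta_eq_zero_of_mem_span hW]
    module
  · rw [hATA, hphi.inner_xi_map, Osc.inner_xi_xi, Osc.inner_xi_zeta]
    module
  · rw [hATA, hphi.inner_zeta_map, Osc.inner_zeta_xi, Osc.inner_zeta_zeta]
    module
  · rw [hATA, hphi.inner_map_self_eq_one hVxi hVzeta hVunit, hphi.inner_map_xi,
      hphi.inner_map_zeta]
    module

/-- For a unit `V ∈ span(e₁,…,e_{2n})`, the action of `A_Vᵀ A_V`:
it is `¼ g(·, φV) φV` on `span(e₁,…,e_{2n})`, and on `span(ξ,ζ)` it is given by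
`A_Vᵀ A_V ξ = ¼ ξ − ½ g(V, E_λ V) ζ`, `A_Vᵀ A_V ζ = −½ g(V, E_λ V) ξ + g(V, E_λ² V) ζ`.
In particular `φV` is an eigenvector with eigenvalue `¼`. -/
theorem ata_action (n : ℕ) (hn : 1 ≤ n) (lam : Fin n → ℝ)
    (br nab : Osc n →ₗ[ℝ] Osc n →ₗ[ℝ] Osc n)
    (hbr : IsOscBracket n lam br) (hlc : IsLeviCivita n br nab)
    (phi El : Osc n →ₗ[ℝ] Osc n) (hphi : IsPhi n phi) (hEl : IsElam n lam El)
    (V : Osc n)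
    (hV : V ∈ Submodule.span ℝ (Set.range (oe n) ∪ Set.range (oE n)))
    (hVunit : ‖V‖ = 1)
    (AT : Osc n →ₗ[ℝ] Osc n)
    (hAT : ∀ X Y : Osc n, ⟪nomizu nab V X, Y⟫ = ⟪X, AT Y⟫) :
    (∀ W ∈ Submodule.span ℝ (Set.range (oe n) ∪ Set.range (oE n)),
      AT (nomizu nab V W) = ((1/4) * ⟪W, phi V⟫) • phi V) ∧
    AT (nomizu nab V (oXi n)) =
      ((1/4) : ℝ) • oXi n - ((1/2) * ⟪V, El V⟫) • oZeta n ∧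
    AT (nomizu nab V (oZeta n)) =
      -(((1/2) * ⟪V, El V⟫) • oXi n) + ⟪V, El (El V)⟫ • oZeta n ∧
    AT (nomizu nab V (phi V)) = ((1/4) : ℝ) • phi V :=
  ata_action_general n lam br nab hbr hlc phi El hphi hEl V hV hVunit AT hAT
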